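/- arXiv:2403.03301 — 6 statements merged into one kernel-verified Lean document; each statement's English description precedes it below -/
import Mathlib

section
/- For every odd prime p, the truncated sum \sum_{k=0}^{p-1} \binom{-1/2}{k}^2 is congruent to (-1)^{(p-1)/2} modulo p^2, where \binom{-1/2}{k} is interpreted p-adically (equivalently, \sum_{k=0}^{p-1} \binom{2k}{k}^2 / 16^k \equiv (-1)^{(p-1)/2} mod p^2 in Z_p). -/
open Finset

lemma refl_aux (n : ℕ) :
    2 * (∑ k ∈ range (n+1), k * (Nat.centralBinom k * Nat.centralBinom (n-k)))
      = n * ∑ k ∈ range (n+1), Nat.centralBinom k * Nat.centralBinom (n-k) := by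
  have h := Finset.sum_range_reflect
    (fun k => k * (Nat.centralBinom k * Nat.centralBinom (n-k))) (n+1)
  rw [two_mul, Finset.mul_sum]
  nth_rewrite 1 [← h]
  rw [← Finset.sum_add_distrib]
  apply Finset.sum_congr rfl
  intro k hk
  have hk' : k ≤ n := Nat.lt_succ_iff.mp (Finset.mem_range.mp hk)
  simp only [Nat.add_sub_cancel, Nat.sub_sub_self hk']
  have h1 : Nat.centralBinom (n-k) * Nat.centralBinom k
      = Nat.centralBinom k * Nat.centralBinom (n-k) := mul_comm _ _
  rw [h1, ← add_mul, Nat.sub_add_cancel hk']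

lemma conv_nat : ∀ n : ℕ, ∑ k ∈ range (n+1),
    Nat.centralBinom k * Nat.centralBinom (n-k) = 4 ^ n := by
  intro n
  induction n with
  | zero => simp [Nat.centralBinom]
  | succ n ih =>
    set S1 := ∑ k ∈ range (n+2), Nat.centralBinom k * Nat.centralBinom (n+1-k) with hS1
    have hT : ∑ k ∈ range (n+2), k * (Nat.centralBinom k * Nat.centralBinom (n+1-k))
        = 4 * (∑ k ∈ range (n+1), k * (Nat.centralBinom k * Nat.centralBinom (n-k)))
          + 2 * ∑ k ∈ range (n+1), Nat.centralBinom k * Nat.centralBinom (n-k) := by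
      rw [Finset.sum_range_succ' (fun k => k * (Nat.centralBinom k * Nat.centralBinom (n+1-k))) (n+1)]
      simp only [Nat.zero_mul, add_zero]
      rw [Finset.mul_sum, Finset.mul_sum, ← Finset.sum_add_distrib]
      apply Finset.sum_congr rfl
      intro k hk
      have hrec := Nat.succ_mul_centralBinom_succ k
      have h2 : n + 1 - (k+1) = n - k := by omega
      rw [h2, ← mul_assoc, hrec]
      ring
    have h2T := refl_aux (n+1)
    have h2T' := refl_aux n
    rw [ih] at h2T'
    have key : (n+1) * S1 = (n+1) * (4 * 4 ^ n) := by
      calc (n+1) * S1 = 2 * ∑ k ∈ range (n+2),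
            k * (Nat.centralBinom k * Nat.centralBinom (n+1-k)) := h2T.symm
        _ = 4 * (2 * ∑ k ∈ range (n+1), k * (Nat.centralBinom k * Nat.centralBinom (n-k)))
              + 4 * 4 ^ n := by rw [hT, ih]; ring
        _ = 4 * (n * 4 ^ n) + 4 * 4 ^ n := by rw [h2T']
        _ = (n+1) * (4 * 4 ^ n) := by ring
    have h := Nat.eq_of_mul_eq_mul_left (Nat.succ_pos n) key
    rw [h]; ring

section Padic
variable {p : ℕ} [hp : Fact p.Prime]

lemma padic_dvd_iff (x : ℤ_[p]) : (p : ℤ_[p]) ∣ x ↔ PadicInt.toZMod x = 0 := by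
  rw [← Ideal.mem_span_singleton, ← PadicInt.maximalIdeal_eq_span_p,
    ← PadicInt.ker_toZMod, RingHom.mem_ker]

lemma padic_isUnit_iff (x : ℤ_[p]) : IsUnit x ↔ ¬ (p : ℤ_[p]) ∣ x := by
  rw [PadicInt.isUnit_iff, ← PadicInt.norm_lt_one_iff_dvd, not_lt]
  constructor
  · intro h; rw [h]
  · intro h; exact le_antisymm (PadicInt.norm_le_one x) h

lemma padic_nat_isUnit {n : ℕ} (hn : ¬ p ∣ n) : IsUnit (n : ℤ_[p]) := by
  rw [padic_isUnit_iff, padic_dvd_iff, map_natCast, ZMod.natCast_eq_zero_iff]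
  exact hn

lemma padic_nat_isUnit' {n : ℕ} (h0 : 0 < n) (h1 : n < p) : IsUnit (n : ℤ_[p]) :=
  padic_nat_isUnit (Nat.not_dvd_of_pos_of_lt h0 h1)

lemma padic_factorial_isUnit {n : ℕ} (h : n < p) :
    IsUnit ((Nat.factorial n : ℕ) : ℤ_[p]) := by
  apply padic_nat_isUnit
  intro hd
  have := (Nat.Prime.dvd_factorial hp.out).mp hd
  omega

lemma unit_mul_dvd {u x y : ℤ_[p]} (hu : IsUnit u) (h : y ∣ u * x) : y ∣ x := by
  obtain ⟨v, rfl⟩ := hu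
  simpa using h.mul_left (↑v⁻¹ : ℤ_[p])

/-- `W k = centralBinom k / 4^k` in `ℤ_[p]`. -/
noncomputable def Wp (p : ℕ) [Fact p.Prime] (k : ℕ) : ℤ_[p] :=
  (Nat.centralBinom k : ℤ_[p]) * (Ring.inverse (4 : ℤ_[p])) ^ k

/-- `V k = ∏_{j<k} ((m-j) - p/2)` in `ℤ_[p]`. -/
noncomputable def Vp (p : ℕ) [Fact p.Prime] (m k : ℕ) : ℤ_[p] :=
  ∏ j ∈ range k, (((m - j : ℕ) : ℤ_[p]) - (p : ℤ_[p]) * Ring.inverse (2 : ℤ_[p]))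

variable {m : ℕ} (hm : p = 2 * m + 1) (hm1 : 1 ≤ m)

include hm hm1 in
lemma padic_two_isUnit : IsUnit (2 : ℤ_[p]) := by
  have : ((2 : ℕ) : ℤ_[p]) = (2 : ℤ_[p]) := by norm_num
  rw [← this]
  exact padic_nat_isUnit' (by norm_num) (by omega)

include hm hm1 in
lemma padic_four_isUnit : IsUnit (4 : ℤ_[p]) := by
  have : ((4 : ℕ) : ℤ_[p]) = (4 : ℤ_[p]) := by norm_num
  rw [← this]
  apply padic_nat_isUnit
  intro h
  have h2 : p ∣ 2 ^ 2 := by norm_num at h ⊢; exact h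
  have := (Nat.Prime.dvd_of_dvd_pow hp.out h2)
  have := Nat.le_of_dvd (by norm_num) this
  omega

include hm hm1 in
lemma Wp_rec (k : ℕ) :
    2 * ((k : ℤ_[p]) + 1) * Wp p (k + 1) = (2 * (k : ℤ_[p]) + 1) * Wp p k := by
  have hc := Nat.succ_mul_centralBinom_succ k
  have hc' : ((k : ℤ_[p]) + 1) * (Nat.centralBinom (k+1) : ℤ_[p])
      = 2 * (2 * (k : ℤ_[p]) + 1) * (Nat.centralBinom k : ℤ_[p]) := by
    exact_mod_cast congrArg (Nat.cast : ℕ → ℤ_[p]) hc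
  have h4 : (4 : ℤ_[p]) * Ring.inverse (4 : ℤ_[p]) = 1 :=
    Ring.mul_inverse_cancel _ (padic_four_isUnit hm hm1)
  unfold Wp
  rw [pow_succ]
  linear_combination (2 * Ring.inverse (4:ℤ_[p]) ^ k * Ring.inverse (4:ℤ_[p])) * hc'
    + ((2 * (k:ℤ_[p]) + 1) * (Nat.centralBinom k : ℤ_[p]) * Ring.inverse (4:ℤ_[p]) ^ k) * h4

include hm hm1 in
lemma Wp_fact (k : ℕ) (hk : k ≤ m + 1) :
    ((Nat.factorial k : ℕ) : ℤ_[p]) * Wp p k = (-1) ^ k * Vp p m k := by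
  induction k with
  | zero => simp [Wp, Vp, Nat.centralBinom]
  | succ k ih =>
    have hkm : k ≤ m := by omega
    have ih' := ih (by omega)
    have e2 := Wp_rec hm hm1 k
    have e3 : (2 : ℤ_[p]) * Ring.inverse (2 : ℤ_[p]) = 1 :=
      Ring.mul_inverse_cancel _ (padic_two_isUnit hm hm1)
    have e4 : (p : ℤ_[p]) = 2 * (m : ℤ_[p]) + 1 := by
      have h := congrArg (Nat.cast : ℕ → ℤ_[p]) hm
      push_cast at h; exact h
    have e5 : ((m - k : ℕ) : ℤ_[p]) = (m : ℤ_[p]) - (k : ℤ_[p]) := by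
      rw [Nat.cast_sub hkm]
    rw [Vp, Finset.prod_range_succ, ← Vp, Nat.factorial_succ]
    push_cast
    apply (padic_two_isUnit hm hm1).mul_left_cancel
    linear_combination ((Nat.factorial k : ℕ) : ℤ_[p]) * e2 + (2 * (k:ℤ_[p]) + 1) * ih'
      + 2 * (-1:ℤ_[p])^k * Vp p m k * e5 - (-1:ℤ_[p])^k * Vp p m k * (p : ℤ_[p]) * e3
      - (-1:ℤ_[p])^k * Vp p m k * e4

include hm hm1 in
lemma Wp_tail (k : ℕ) (hk1 : m + 1 ≤ k) (hk2 : k ≤ 2 * m) : (p : ℤ_[p]) ∣ Wp p k := by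
  induction k, hk1 using Nat.le_induction with
  | base =>
    have h1 := Wp_fact hm hm1 (m+1) le_rfl
    have hdV : (p : ℤ_[p]) ∣ Vp p m (m+1) := by
      have hmem : m ∈ range (m+1) := by simp
      refine dvd_trans ?_ (Finset.dvd_prod_of_mem _ hmem)
      simp only [Nat.sub_self, Nat.cast_zero, zero_sub, dvd_neg]
      exact Dvd.intro _ rfl
    have : (p : ℤ_[p]) ∣ ((Nat.factorial (m+1) : ℕ) : ℤ_[p]) * Wp p (m+1) := by
      rw [h1]; exact hdV.mul_left _
    exact unit_mul_dvd (padic_factorial_isUnit (by omega)) this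
  | succ k hk ih =>
    have ih' := ih (by omega)
    have e2 := Wp_rec hm hm1 k
    have : (p : ℤ_[p]) ∣ 2 * ((k : ℤ_[p]) + 1) * Wp p (k+1) := by
      rw [e2]; exact ih'.mul_left _
    have hu : IsUnit (2 * ((k : ℤ_[p]) + 1)) := by
      apply (padic_two_isUnit hm hm1).mul
      have : ((k + 1 : ℕ) : ℤ_[p]) = (k : ℤ_[p]) + 1 := by push_cast; ring
      rw [← this]
      exact padic_nat_isUnit' (by omega) (by omega)
    exact unit_mul_dvd hu this

lemma Vp_phi (k : ℕ) :
    PadicInt.toZMod (Vp p m k) = ((Nat.descFactorial m k : ℕ) : ZMod p) := by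
  rw [Vp, map_prod, Nat.descFactorial_eq_prod_range, Nat.cast_prod]
  apply Finset.prod_congr rfl
  intro j _
  rw [map_sub, map_mul, map_natCast, map_natCast, ZMod.natCast_self, zero_mul, sub_zero]

include hm hm1 in
lemma Wp_phi (k : ℕ) (hk : k ≤ m) :
    PadicInt.toZMod (Wp p k) = (-1) ^ k * ((Nat.choose m k : ℕ) : ZMod p) := by
  have h1 := congrArg PadicInt.toZMod (Wp_fact hm hm1 k (by omega))
  rw [map_mul, map_mul, map_natCast, map_pow, map_neg, map_one, Vp_phi,
    Nat.descFactorial_eq_factorial_mul_choose, Nat.cast_mul] at h1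
  have hf : ((Nat.factorial k : ℕ) : ZMod p) ≠ 0 := by
    rw [Ne, ZMod.natCast_eq_zero_iff]
    intro hd
    have := (Nat.Prime.dvd_factorial hp.out).mp hd
    omega
  apply mul_left_cancel₀ hf
  rw [h1]; ring

include hm hm1 in
lemma Wp_key (k : ℕ) (hk : k ≤ m) :
    (p : ℤ_[p]) ∣ (Wp p k - (-1) ^ m * Wp p (m - k)) := by
  rw [padic_dvd_iff, map_sub, map_mul, map_pow, map_neg, map_one,
    Wp_phi hm hm1 k hk, Wp_phi hm hm1 (m - k) (Nat.sub_le _ _), Nat.choose_symm hk]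
  have h : ((-1 : ZMod p)) ^ m * (-1) ^ (m - k) = (-1) ^ k := by
    rw [← pow_add]
    have he : m + (m - k) = k + 2 * (m - k) := by omega
    rw [he, pow_add, pow_mul, neg_one_sq, one_pow, mul_one]
  rw [← mul_assoc, h, sub_self]

include hm hm1 in
lemma Wp_conv : ∑ k ∈ range (m + 1), Wp p k * Wp p (m - k) = 1 := by
  have h4 : (4 : ℤ_[p]) * Ring.inverse (4 : ℤ_[p]) = 1 :=
    Ring.mul_inverse_cancel _ (padic_four_isUnit hm hm1)
  have step : ∀ k ∈ range (m + 1), Wp p k * Wp p (m - k)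
      = ((Nat.centralBinom k * Nat.centralBinom (m - k) : ℕ) : ℤ_[p])
        * (Ring.inverse (4 : ℤ_[p])) ^ m := by
    intro k hk
    have hkm : k ≤ m := Nat.lt_succ_iff.mp (Finset.mem_range.mp hk)
    unfold Wp
    have : Ring.inverse (4:ℤ_[p]) ^ k * Ring.inverse (4:ℤ_[p]) ^ (m - k)
        = Ring.inverse (4:ℤ_[p]) ^ m := by
      rw [← pow_add, Nat.add_sub_cancel' hkm]
    push_cast
    linear_combination ((Nat.centralBinom k : ℤ_[p]) * (Nat.centralBinom (m-k) : ℤ_[p])) * this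
  rw [Finset.sum_congr rfl step, ← Finset.sum_mul, ← Nat.cast_sum, conv_nat]
  push_cast
  rw [← mul_pow, h4, one_pow]

end Padic

/-- For every odd prime `p`, `∑_{k=0}^{p-1} binom(2k,k)^2 / 16^k ≡ (-1)^((p-1)/2) mod p^2`
in the `p`-adic integers. -/
theorem stmt_0 (p : ℕ) [Fact p.Prime] (hodd : Odd p) :
    (p : ℤ_[p]) ^ 2 ∣
      (∑ k ∈ Finset.range p,
          ((Nat.choose (2 * k) k : ℤ_[p]) ^ 2 * (Ring.inverse (16 : ℤ_[p])) ^ k))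
        - (-1 : ℤ_[p]) ^ ((p - 1) / 2) := by
  have hp : p.Prime := Fact.out
  obtain ⟨m, hm⟩ := hodd
  have hm' : p = 2 * m + 1 := by omega
  have hm1 : 1 ≤ m := by have := hp.two_le; omega
  clear hm
  have hhalf : (p - 1) / 2 = m := by omega
  rw [hhalf]
  have hterm : ∀ k ∈ range p, (Nat.choose (2*k) k : ℤ_[p])^2 * (Ring.inverse (16:ℤ_[p]))^k
      = (Wp p k)^2 := by
    intro k _
    have h16 : (16:ℤ_[p]) = 4^2 := by norm_num
    have hinv : Ring.inverse (16:ℤ_[p]) = (Ring.inverse (4:ℤ_[p]))^2 := by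
      obtain ⟨u, hu⟩ := padic_four_isUnit hm' hm1
      rw [h16, ← hu, ← Units.val_pow_eq_pow_val, Ring.inverse_unit, Ring.inverse_unit,
        ← Units.val_pow_eq_pow_val, inv_pow]
    rw [hinv]
    unfold Wp
    rw [Nat.centralBinom_eq_two_mul_choose]
    ring
  rw [Finset.sum_congr rfl hterm]
  set e : ℤ_[p] := (-1)^m with he
  have hsplit : ∑ k ∈ range p, (Wp p k)^2
      = (∑ k ∈ range (m+1), (Wp p k)^2) + ∑ k ∈ Ico (m+1) p, (Wp p k)^2 := by
    rw [range_eq_Ico, ← Finset.sum_Ico_consecutive _ (Nat.zero_le (m+1)) (by omega : m+1 ≤ p),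
      ← range_eq_Ico]
  have htail : (p:ℤ_[p])^2 ∣ ∑ k ∈ Ico (m+1) p, (Wp p k)^2 := by
    apply Finset.dvd_sum
    intro k hk
    rw [Finset.mem_Ico] at hk
    exact pow_dvd_pow_of_dvd (Wp_tail hm' hm1 k hk.1 (by omega)) 2
  have he2 : e^2 = 1 := by
    rw [he, ← pow_mul, mul_comm m 2, pow_mul, neg_one_sq, one_pow]
  have hrefl : ∑ k ∈ range (m+1), (Wp p (m - k))^2 = ∑ k ∈ range (m+1), (Wp p k)^2 := by
    have h := Finset.sum_range_reflect (fun k => (Wp p k)^2) (m+1)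
    simpa using h
  have hmain : ∑ k ∈ range (m+1), (Wp p k - e * Wp p (m - k))^2
      = 2 * ((∑ k ∈ range (m+1), (Wp p k)^2) - e) := by
    have expand : ∀ k ∈ range (m+1), (Wp p k - e * Wp p (m-k))^2
        = ((Wp p k)^2 + (Wp p (m-k))^2) - 2 * e * (Wp p k * Wp p (m-k)) := by
      intro k _
      linear_combination (Wp p (m-k))^2 * he2
    rw [Finset.sum_congr rfl expand, Finset.sum_sub_distrib, Finset.sum_add_distrib,
      hrefl, ← Finset.mul_sum, Wp_conv hm' hm1]
    ring
  have hdvd2 : (p:ℤ_[p])^2 ∣ 2 * ((∑ k ∈ range (m+1), (Wp p k)^2) - e) := by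
    rw [← hmain]
    apply Finset.dvd_sum
    intro k hk
    have hkm : k ≤ m := Nat.lt_succ_iff.mp (Finset.mem_range.mp hk)
    exact pow_dvd_pow_of_dvd (Wp_key hm' hm1 k hkm) 2
  have hdvd1 : (p:ℤ_[p])^2 ∣ (∑ k ∈ range (m+1), (Wp p k)^2) - e :=
    unit_mul_dvd (padic_two_isUnit hm' hm1) hdvd2
  rw [hsplit]
  have hrearr : (∑ k ∈ range (m+1), (Wp p k)^2) + (∑ k ∈ Ico (m+1) p, (Wp p k)^2) - e
      = ((∑ k ∈ range (m+1), (Wp p k)^2) - e) + ∑ k ∈ Ico (m+1) p, (Wp p k)^2 := by ring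
  rw [hrearr]
  exact dvd_add hdvd1 htail
end

section
/- Let A_n = \sum_{k=0}^n \binom{n}{k}^2 \binom{n+k}{k}^2 be the Ap\'ery numbers. For every prime p with p \equiv 1 or 3 mod 8, \sum_{k=0}^{p-1} (1 + 2k) A_k \equiv p mod p^3. -/
open Finset

/-- The Apéry numbers for `ζ(3)`: `A n = ∑_{k≤n} binom(n,k)² binom(n+k,k)²`. -/
def apery (n : ℕ) : ℤ :=
  ∑ k ∈ Finset.range (n + 1), (Nat.choose n k : ℤ) ^ 2 * (Nat.choose (n + k) k : ℤ) ^ 2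

/-!
Telescoping in `n` (Pascal-type identities for `C(n+j, 2j+1)`) gives
`∑_{k<n} (2k+1) A_k = ∑_{j<n} (2j+1) (C(2j,j) C(n+j,2j+1))²`.
For `n = p`, put `w_j = (2j+1) C(2j,j) C(p+j,2j+1)`; then
`w_j (j!)² = (p+j)(p+j-1)⋯(p-j) = p ∏_{1≤t≤j} (p² - t²)`, so `w_j ≡ (-1)^j p (mod p³)`
and the `j`-th term `f_j` satisfies `(2j+1) f_j = w_j² ≡ p² (mod p⁴)`.
The middle index `2j+1 = p` gives `f_j ≡ p (mod p³)`.
Every other `j` is paired with `p-1-j`: the two odd factors `2j+1` are prime to `p` and add up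
to `2p`, so `f_j + f_{p-1-j} ≡ 0 (mod p³)`.
-/

open Nat

lemma Int.ModEq.cancel_left_of_isCoprime {m a b c : ℤ} (hmc : IsCoprime m c)
    (h : c * a ≡ c * b [ZMOD m]) : a ≡ b [ZMOD m] :=
  Int.modEq_iff_dvd.mpr (hmc.dvd_of_dvd_mul_left (by rw [mul_sub]; exact Int.modEq_iff_dvd.mp h))

lemma Int.add_modEq_zero_of_mul_modEq {p a b x y : ℤ} (hp : Prime p) (ha : ¬ p ∣ a)
    (hb : ¬ p ∣ b) (hab : p ∣ a + b) (hx : a * x ≡ p ^ 2 [ZMOD p ^ 3])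
    (hy : b * y ≡ p ^ 2 [ZMOD p ^ 3]) : x + y ≡ 0 [ZMOD p ^ 3] := by
  have hcop : IsCoprime (p ^ 3) (a * b) :=
    (hp.coprime_iff_not_dvd.mpr fun h ↦ (hp.dvd_or_dvd h).elim ha hb).pow_left
  refine Int.ModEq.cancel_left_of_isCoprime hcop ?_
  obtain ⟨c, hc⟩ := hab
  calc a * b * (x + y) = b * (a * x) + a * (b * y) := by ring
    _ ≡ b * p ^ 2 + a * p ^ 2 [ZMOD p ^ 3] := (hx.mul_left b).add (hy.mul_left a)
    _ ≡ a * b * 0 [ZMOD p ^ 3] :=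
        Int.modEq_iff_dvd.mpr ⟨-c, by linear_combination -p ^ 2 * hc⟩

def aperySumTerm (n j : ℕ) : ℤ :=
  (2 * j + 1) * ((Nat.choose (2 * j) j : ℤ) * Nat.choose (n + j) (2 * j + 1)) ^ 2

lemma aperySumTerm_succ_sub {n j : ℕ} (hj : j ≤ n) :
    aperySumTerm (n + 1) j - aperySumTerm n j =
      (2 * n + 1) * ((Nat.choose n j : ℤ) * Nat.choose (n + j) j) ^ 2 := by
  have lower : Nat.choose (n + j) (2 * j + 1) * (2 * j + 1) =
      Nat.choose (n + j) (2 * j) * (n - j) := by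
    rw [Nat.choose_succ_right_eq, show n + j - 2 * j = n - j by omega]
  have upper := Nat.add_one_mul_choose_eq (n + j) (2 * j)
  have central : Nat.choose (n + j) (2 * j) * Nat.choose (2 * j) j =
      Nat.choose n j * Nat.choose (n + j) j := by
    rw [Nat.choose_mul (by omega), show n + j - j = n by omega, show 2 * j - j = j by omega,
      mul_comm]
  zify [hj] at lower upper central
  set c : ℤ := (Nat.choose (2 * j) j : ℤ)
  set T : ℤ := Nat.choose n j * Nat.choose (n + j) j
  have hU : (2 * j + 1) * c * Nat.choose (n + j + 1) (2 * j + 1) = (n + j + 1) * T := by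
    linear_combination (-c) * upper + (n + j + 1) * central
  have hL : (2 * j + 1) * c * Nat.choose (n + j) (2 * j + 1) = (n - j) * T := by
    linear_combination c * lower + (n - j) * central
  apply mul_left_cancel₀ (show (2 * j + 1 : ℤ) ≠ 0 by positivity)
  unfold aperySumTerm
  rw [show n + 1 + j = n + j + 1 by ring]
  -- the difference of squares closes up because `(n+j+1)² - (n-j)² = (2j+1)(2n+1)`
  linear_combination ((2 * j + 1) * c * Nat.choose (n + j + 1) (2 * j + 1) + (n + j + 1) * T) * hU
    - ((2 * j + 1) * c * Nat.choose (n + j) (2 * j + 1) + (n - j) * T) * hL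

lemma aperySumTerm_self (n : ℕ) : aperySumTerm n n = 0 := by
  simp [aperySumTerm, Nat.choose_eq_zero_of_lt (show n + n < 2 * n + 1 by omega)]

lemma sum_range_mul_apery (n : ℕ) :
    ∑ k ∈ range n, (1 + 2 * (k : ℤ)) * apery k = ∑ j ∈ range n, aperySumTerm n j := by
  refine sum_range_induction _ (fun n ↦ ∑ j ∈ range n, aperySumTerm n j) rfl n fun k _ ↦ ?_
  have extend :
      ∑ j ∈ range k, aperySumTerm k j = ∑ j ∈ range (k + 1), aperySumTerm k j := by
    rw [sum_range_succ, aperySumTerm_self, add_zero]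
  rw [extend, ← sub_eq_iff_eq_add', ← sum_sub_distrib, apery, mul_sum]
  refine sum_congr rfl fun j hj ↦ ?_
  rw [aperySumTerm_succ_sub (Nat.lt_succ_iff.mp (mem_range.mp hj))]
  ring

lemma descFactorial_add_two_mul_add_one {n j : ℕ} (hj : j ≤ n) :
    ((n + j).descFactorial (2 * j + 1) : ℤ) =
      n * ∏ t ∈ range j, ((n : ℤ) ^ 2 - (t + 1) ^ 2) := by
  induction j with
  | zero => simp
  | succ j ih =>
    rw [show n + (j + 1) = n + j + 1 by ring, show 2 * (j + 1) + 1 = 2 * j + 1 + 1 + 1 by ring,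
      Nat.succ_descFactorial_succ, Nat.descFactorial_succ,
      show n + j - (2 * j + 1) = n - (j + 1) by omega]
    push_cast [hj, ih (by omega), prod_range_succ]
    ring

lemma two_mul_add_one_mul_choose_mul_factorial_sq (n j : ℕ) :
    (2 * j + 1) * Nat.choose (2 * j) j * Nat.choose (n + j) (2 * j + 1) * j ! ^ 2 =
      (n + j).descFactorial (2 * j + 1) := by
  have central := Nat.choose_mul_factorial_mul_factorial (show j ≤ 2 * j by omega)
  rw [show 2 * j - j = j by omega] at central
  rw [Nat.descFactorial_eq_factorial_mul_choose, Nat.factorial_succ, ← central]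
  ring

lemma two_mul_add_one_mul_choose_mul_choose_modEq {p j : ℕ} (hp : p.Prime) (hj : j < p) :
    (2 * j + 1) * (Nat.choose (2 * j) j : ℤ) * Nat.choose (p + j) (2 * j + 1) ≡
      (-1) ^ j * p [ZMOD p ^ 3] := by
  have hcop : IsCoprime ((p : ℤ) ^ 3) ((j ! : ℤ) ^ 2) := by
    refine (((Nat.prime_iff_prime_int.mp hp).coprime_iff_not_dvd.mpr ?_).pow_right).pow_left
    rw [Int.natCast_dvd_natCast, hp.dvd_factorial]
    omega
  have hprod :
      ∏ t ∈ range j, ((p : ℤ) ^ 2 - (t + 1) ^ 2) ≡ (-1) ^ j * (j ! : ℤ) ^ 2 [ZMOD p ^ 2] :=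
    calc _ ≡ ∏ t ∈ range j, -((t : ℤ) + 1) ^ 2 [ZMOD p ^ 2] :=
          Int.ModEq.prod fun t _ ↦ Int.modEq_iff_dvd.mpr ⟨-1, by ring⟩
      _ = (-1) ^ j * (j ! : ℤ) ^ 2 := by
          rw [prod_neg, card_range, prod_pow, ← prod_range_add_one_eq_factorial]
          push_cast
          rfl
  refine Int.ModEq.cancel_left_of_isCoprime hcop ?_
  calc (j ! : ℤ) ^ 2 *
        ((2 * j + 1) * (Nat.choose (2 * j) j : ℤ) * Nat.choose (p + j) (2 * j + 1))
      = p * ∏ t ∈ range j, ((p : ℤ) ^ 2 - (t + 1) ^ 2) := by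
        rw [← descFactorial_add_two_mul_add_one hj.le,
          ← two_mul_add_one_mul_choose_mul_factorial_sq]
        push_cast
        ring
    _ ≡ p * ((-1) ^ j * (j ! : ℤ) ^ 2) [ZMOD p ^ 3] := by
        rw [show (p : ℤ) ^ 3 = p * p ^ 2 by ring]
        exact hprod.mul_left'
    _ = (j ! : ℤ) ^ 2 * ((-1) ^ j * p) := by ring

lemma two_mul_add_one_mul_aperySumTerm_modEq {p j : ℕ} (hp : p.Prime) (hj : j < p) :
    (2 * j + 1) * aperySumTerm p j ≡ p ^ 2 [ZMOD p ^ 4] := by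
  obtain ⟨k, hk⟩ := Int.modEq_iff_dvd.mp (two_mul_add_one_mul_choose_mul_choose_modEq hp hj)
  have hsign : ((-1 : ℤ) ^ j) ^ 2 = 1 := by
    rw [← pow_mul, mul_comm, pow_mul, neg_one_sq, one_pow]
  refine Int.modEq_iff_dvd.mpr ⟨2 * (-1) ^ j * k - p ^ 2 * k ^ 2, ?_⟩
  unfold aperySumTerm
  linear_combination ((-1) ^ j * p + (2 * j + 1) * (Nat.choose (2 * j) j : ℤ) *
    Nat.choose (p + j) (2 * j + 1) - p ^ 3 * k) * hk
    - p ^ 2 * hsign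

lemma sum_range_aperySumTerm_modEq {p : ℕ} (hp : p.Prime) (hp2 : p ≠ 2) :
    ∑ j ∈ range p, aperySumTerm p j ≡ p [ZMOD p ^ 3] := by
  obtain ⟨m, hm⟩ := hp.odd_of_ne_two hp2
  have hpz : Prime (p : ℤ) := Nat.prime_iff_prime_int.mp hp
  have key (j : ℕ) (hj : j < p) := two_mul_add_one_mul_aperySumTerm_modEq hp hj
  have not_dvd (j : ℕ) (hj : j < p) (hjm : 2 * j + 1 ≠ p) : ¬ (p : ℤ) ∣ 2 * j + 1 :=
    fun h ↦ hjm (Nat.eq_of_dvd_of_lt_two_mul (by omega) (by exact_mod_cast h) (by omega))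
  have middle : aperySumTerm p m ≡ p [ZMOD p ^ 3] := by
    refine Int.ModEq.mul_left_cancel' hpz.ne_zero ?_
    have := key m (by omega)
    rw [show (2 * m + 1 : ℤ) = p by rw [hm]; push_cast; ring] at this
    rwa [← pow_two, ← _root_.pow_succ']
  have pair : ∀ j ∈ (range p).erase m,
      aperySumTerm p j + aperySumTerm p (p - 1 - j) ≡ 0 [ZMOD p ^ 3] := by
    intro j hj
    obtain ⟨hjm, hj⟩ := mem_erase.mp hj
    rw [mem_range] at hj
    have hcast : ((p - 1 - j : ℕ) : ℤ) = p - 1 - j := by omega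
    exact Int.add_modEq_zero_of_mul_modEq hpz (not_dvd j hj (by omega))
      (not_dvd (p - 1 - j) (by omega) (by omega)) ⟨2, by rw [hcast]; ring⟩
      ((key j hj).of_dvd (pow_dvd_pow _ (by norm_num)))
      ((key (p - 1 - j) (by omega)).of_dvd (pow_dvd_pow _ (by norm_num)))
  have hcop : IsCoprime ((p : ℤ) ^ 3) 2 := by
    refine (hpz.coprime_iff_not_dvd.mpr fun h ↦ ?_).pow_left
    have := Int.le_of_dvd two_pos h
    have := hp.two_le
    omega
  refine Int.ModEq.cancel_left_of_isCoprime hcop ?_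
  calc 2 * ∑ j ∈ range p, aperySumTerm p j
      = ∑ j ∈ range p, (aperySumTerm p j + aperySumTerm p (p - 1 - j)) := by
        rw [sum_add_distrib, sum_range_reflect, two_mul]
    _ = (aperySumTerm p m + aperySumTerm p m) +
          ∑ j ∈ (range p).erase m, (aperySumTerm p j + aperySumTerm p (p - 1 - j)) := by
        rw [← add_sum_erase _ _ (mem_range.mpr (show m < p by omega)),
          show p - 1 - m = m by omega]
    _ ≡ (p + p) + ∑ j ∈ (range p).erase m, 0 [ZMOD p ^ 3] :=
        (middle.add middle).add (Int.ModEq.sum pair)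
    _ = 2 * p := by rw [sum_const_zero]; ring

/-- For every prime `p ≡ 1, 3 mod 8`, `∑_{k<p} (1+2k) A_k ≡ p mod p³` in the integers. -/
theorem stmt_13 (p : ℕ) (hp : p.Prime) (hp8 : p % 8 = 1 ∨ p % 8 = 3) :
    (p : ℤ) ^ 3 ∣ (∑ k ∈ Finset.range p, (1 + 2 * (k : ℤ)) * apery k) - p := by
  rw [sum_range_mul_apery]
  exact (sum_range_aperySumTerm_modEq hp (by omega)).symm.dvd
end

section
/- Let p be an odd prime and q a variable. Then in Z_p[[q]], with t = q/(1+q)^2, F(t) := \sum_{k \ge 0} \binom{2k}{k} t^k, and t^\sigma := q^p/(1+q^p)^2, one has F(t) \equiv F_p(t) \cdot F(t^\sigma) mod p^2, where F_p(t) = \sum_{k=0}^{p-1} \binom{2k}{k} t^k. Equivalently, as formal power series in q, (1+q)(1-q^p) / ((1-q)(1+q^p)) \equiv \sum_{k=0}^{p-1} \binom{2k}{k} (q/(1+q)^2)^k mod p^2. -/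
/-! Clearing the denominators `(1 - q)(1 + q^p)(1 + q)^(2p-2)` turns the difference into the
polynomial `(1 + q)^(2p-1)(1 - q^p) - (1 - q)(1 + q^p) T(q)`, where `T(q) = (1 + q)^(2p-2) F_p(t)`.
By induction on `p`, using `T_{p+1} = (1 + q)² T_p + C(2p, p) q^p`, one has `(1 - q) T = A - B`,
where `A` and `B` are the parts of `(1 + q)^(2p-1)` of degree `< p` and `≥ p`, so the polynomial is `2 (B - q^p A) = 2 q^p ∑_{j<p} (C(2p-1, p+j) - C(2p-1, j)) q^j`.
Finally `C(2p-1, p+j) ≡ C(2p-1, j) mod p²`: both sides satisfy the same first-order recurrence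
in `j` modulo `p²` (the defect is `p C(2p, p+j+1)`, and `p ∣ C(2p, p+j+1)`), and they agree at
`j = 0` by Babbage's congruence `C(2p, p) ≡ 2 mod p²`. -/

open Finset PowerSeries

theorem Nat.Prime.sq_dvd_centralBinom_sub_two {p : ℕ} (hp : p.Prime) :
    (p : ℤ) ^ 2 ∣ (p.centralBinom : ℤ) - 2 := by
  obtain ⟨q, rfl⟩ : ∃ q, p = q + 1 := ⟨p - 1, by have := hp.one_lt; omega⟩
  have hsum : ((q + 1).centralBinom : ℤ) - 2 =
      ∑ i ∈ range q, (((q + 1).choose (i + 1) : ℕ) : ℤ) ^ 2 := by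
    rw [Nat.centralBinom, ← Nat.sum_range_choose_sq, sum_range_succ, sum_range_succ']
    push_cast
    simp only [Nat.choose_zero_right, Nat.choose_self, Nat.cast_one, one_pow]
    ring
  rw [hsum]
  refine dvd_sum fun i hi => pow_dvd_pow_of_dvd ?_ 2
  exact_mod_cast hp.dvd_choose_self i.succ_ne_zero (by have := mem_range.mp hi; omega)

theorem Nat.Prime.dvd_choose_two_mul {p k : ℕ} (hp : p.Prime) (hpk : p < k) (hk : k < 2 * p) :
    p ∣ (2 * p).choose k := by
  have := Fact.mk hp
  have hmod : k % p ≠ 0 := by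
    intro h
    obtain ⟨c, rfl⟩ := Nat.dvd_of_mod_eq_zero h
    rcases c with _ | _ | c <;> nlinarith
  have h := Choose.choose_modEq_choose_mod_mul_choose_div (n := 2 * p) (k := k) (p := p)
  rw [Nat.mul_mod_left, Nat.choose_eq_zero_of_lt (Nat.pos_of_ne_zero hmod), Nat.cast_zero,
    zero_mul] at h
  exact Int.natCast_dvd_natCast.mp (Int.modEq_zero_iff_dvd.mp h)

theorem Nat.Prime.sq_dvd_choose_add_sub_choose {p j : ℕ} (hp : p.Prime) (hodd : Odd p)
    (hj : j < p) :
    (p : ℤ) ^ 2 ∣ ((2 * p - 1).choose (p + j) : ℤ) - (2 * p - 1).choose j := by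
  induction j with
  | zero =>
    obtain ⟨m, rfl⟩ : ∃ m, p = m + 1 := ⟨p - 1, by omega⟩
    have hcentral : ((m + 1).centralBinom : ℤ) = 2 * (2 * m + 1).choose (m + 1) := by
      rw [Nat.centralBinom, show 2 * (m + 1) = 2 * m + 1 + 1 by ring, Nat.choose_succ_succ',
        ← Nat.choose_symm_half]
      push_cast
      ring
    have hcop : IsCoprime (2 : ℤ) ((m + 1 : ℕ) ^ 2 : ℤ) := by
      exact_mod_cast Nat.isCoprime_iff_coprime.mpr ((Nat.coprime_two_left.mpr hodd).pow_right 2)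
    have h := hp.sq_dvd_centralBinom_sub_two
    rw [hcentral, show (2 : ℤ) * _ - 2 = 2 * ((2 * m + 1).choose (m + 1) - 1) by ring] at h
    rw [show 2 * (m + 1) - 1 = 2 * m + 1 by omega]
    simpa using hcop.symm.dvd_of_dvd_mul_left h
  | succ j ih =>
    obtain ⟨n, hn⟩ : ∃ n, 2 * p = n + 1 := ⟨2 * p - 1, by omega⟩
    rw [show 2 * p - 1 = n by omega] at ih ⊢
    have hc := Nat.choose_succ_right_eq n j
    have hd := Nat.choose_succ_right_eq n (p + j)
    have hpascal := Nat.choose_succ_succ' n (p + j)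
    rw [← hn] at hpascal
    have hdvd_choose : (p : ℤ) ∣ (2 * p).choose (p + j + 1) :=
      Int.natCast_dvd_natCast.mpr (hp.dvd_choose_two_mul (by omega) (by omega))
    have hstep : ((j + 1 : ℕ) : ℤ) * ((n.choose (p + (j + 1)) : ℤ) - n.choose (j + 1)) =
        (n - j) * ((n.choose (p + j) : ℤ) - n.choose j) - p * (2 * p).choose (p + j + 1) := by
      rw [hpascal]
      zify [show j ≤ n by omega, show p + j ≤ n by omega] at hc hd
      push_cast
      linear_combination hd - hc
    have hcop : IsCoprime ((j + 1 : ℕ) : ℤ) ((p : ℤ) ^ 2) := by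
      rw [← Nat.cast_pow, Nat.isCoprime_iff_coprime]
      exact Nat.Coprime.pow_right 2
        (hp.coprime_iff_not_dvd.mpr (Nat.not_dvd_of_pos_of_lt j.succ_pos hj)).symm
    refine hcop.symm.dvd_of_dvd_mul_left ?_
    have ih' : (p : ℤ) * p ∣ _ := sq (p : ℤ) ▸ ih (by omega)
    rw [hstep, sq]
    exact _root_.dvd_sub (ih'.mul_left _) (mul_dvd_mul_left _ hdvd_choose)

section BinomialSums

variable {R : Type*}

section CommSemiring

variable [CommSemiring R] (x : R)

def binomPartialSum (n k : ℕ) : R := ∑ j ∈ range (k + 1), (n.choose j : R) * x ^ j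

-- `(1 + x)^(2m) F_{m+1}(x / (1 + x)^2)`, the polynomial `T` for `p = m + 1`
def clearedCentralBinomSum (m : ℕ) : R :=
  ∑ k ∈ range (m + 1), ((2 * k).choose k : R) * x ^ k * (1 + x) ^ (2 * (m - k))

theorem binomPartialSum_succ (n k : ℕ) :
    binomPartialSum x n (k + 1) = binomPartialSum x n k + (n.choose (k + 1) : R) * x ^ (k + 1) :=
  sum_range_succ _ _

theorem one_add_mul_binomPartialSum (n k : ℕ) :
    (1 + x) * binomPartialSum x n k + n.choose (k + 1) * x ^ (k + 1) =
      binomPartialSum x (n + 1) (k + 1) := by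
  induction k with
  | zero =>
    simp only [binomPartialSum, zero_add, range_one, sum_singleton, Nat.choose_zero_right,
      Nat.cast_one, pow_zero, mul_one, Nat.choose_one_right, pow_one, sum_range_succ, Nat.cast_add]
    ring
  | succ k ih =>
    rw [binomPartialSum_succ x n k, binomPartialSum_succ x (n + 1) (k + 1), ← ih,
      Nat.choose_succ_succ' n (k + 1)]
    push_cast
    ring

theorem clearedCentralBinomSum_succ (m : ℕ) :
    clearedCentralBinomSum x (m + 1) = (1 + x) ^ 2 * clearedCentralBinomSum x m +
      ((2 * (m + 1)).choose (m + 1) : R) * x ^ (m + 1) := by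
  rw [clearedCentralBinomSum, sum_range_succ, clearedCentralBinomSum, mul_sum, Nat.sub_self,
    mul_zero, pow_zero, mul_one]
  congr 1
  refine sum_congr rfl fun k hk => ?_
  rw [show 2 * (m + 1 - k) = 2 * (m - k) + 2 by have := mem_range.mp hk; omega, pow_add]
  ring

theorem one_add_pow_eq_binomPartialSum_add (m : ℕ) :
    (1 + x) ^ (2 * m + 1) = binomPartialSum x (2 * m + 1) m +
      x ^ (m + 1) * ∑ j ∈ range (m + 1), ((2 * m + 1).choose (m + 1 + j) : R) * x ^ j := by
  rw [add_comm 1 x, add_pow, show 2 * m + 1 + 1 = (m + 1) + (m + 1) by ring, sum_range_add,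
    binomPartialSum, mul_sum]
  simp only [one_pow, mul_one, pow_add]
  congr 1 <;> refine sum_congr rfl fun j _ => by ring

theorem one_add_pow_mul_sum_centralBinom {u : R} (hu : u * (1 + x) ^ 2 = 1) (m : ℕ) :
    (1 + x) ^ (2 * m) * ∑ k ∈ range (m + 1), ((2 * k).choose k : R) * (x * u) ^ k =
      clearedCentralBinomSum x m := by
  rw [mul_sum]
  refine sum_congr rfl fun k hk => ?_
  have hk : k ≤ m := Nat.lt_succ_iff.mp (mem_range.mp hk)
  have hpow : u ^ k * ((1 + x) ^ 2) ^ k = 1 := by rw [← mul_pow, hu, one_pow]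
  calc (1 + x) ^ (2 * m) * (((2 * k).choose k : R) * (x * u) ^ k)
      = ((2 * k).choose k : R) * x ^ k * (1 + x) ^ (2 * (m - k)) * (u ^ k * ((1 + x) ^ 2) ^ k) := by
        rw [show 2 * m = 2 * (m - k) + 2 * k by omega, pow_add, pow_mul (1 + x) 2 k, mul_pow]
        ring
    _ = _ := by rw [hpow, mul_one]

end CommSemiring

variable [CommRing R] (x : R)

theorem one_sub_mul_clearedCentralBinomSum (m : ℕ) :
    (1 - x) * clearedCentralBinomSum x m =
      2 * binomPartialSum x (2 * m + 1) m - (1 + x) ^ (2 * m + 1) := by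
  induction m with
  | zero =>
    simp only [clearedCentralBinomSum, binomPartialSum, zero_add, range_one, zero_tsub, mul_zero,
      pow_zero, mul_one, sum_singleton, Nat.choose_self, Nat.cast_one, Nat.choose_succ_self_right,
      pow_one]
    ring
  | succ m ih =>
    have h1 := one_add_mul_binomPartialSum x (2 * m + 1) m
    have h2 := one_add_mul_binomPartialSum x (2 * m + 2) (m + 1)
    have h3 := binomPartialSum_succ x (2 * m + 3) (m + 1)
    have hc1 : ((2 * m + 2).choose (m + 1) : R) = 2 * (2 * m + 1).choose (m + 1) := by
      rw [Nat.choose_succ_succ', ← Nat.choose_symm_half]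
      push_cast
      ring
    have hc2 : ((2 * m + 3).choose (m + 2) : R) =
        (2 * m + 2).choose (m + 1) + (2 * m + 2).choose (m + 2) := by
      rw [Nat.choose_succ_succ']
      push_cast
      ring
    rw [clearedCentralBinomSum_succ, show 2 * (m + 1) = 2 * m + 2 by ring,
      show 2 * m + 2 + 1 = 2 * m + 3 by ring]
    rw [show 2 * m + 1 + 1 = 2 * m + 2 by ring] at h1
    rw [show m + 1 + 1 = m + 2 by ring, show 2 * m + 2 + 1 = 2 * m + 3 by ring] at h2 h3
    rw [hc2, hc1] at h3
    rw [hc1]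
    linear_combination (1 + x) ^ 2 * ih + 2 * (1 + x) * h1 + 2 * h2 + 2 * h3

theorem one_add_pow_mul_sub_clearedCentralBinomSum (m : ℕ) :
    (1 + x) ^ (2 * m + 1) * (1 - x ^ (m + 1)) -
        (1 - x) * (1 + x ^ (m + 1)) * clearedCentralBinomSum x m =
      2 * x ^ (m + 1) * ∑ j ∈ range (m + 1),
        (((2 * m + 1).choose (m + 1 + j) : R) - (2 * m + 1).choose j) * x ^ j := by
  have hlower := one_sub_mul_clearedCentralBinomSum x m
  have hsplit := one_add_pow_eq_binomPartialSum_add x m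
  simp only [sub_mul, sum_sub_distrib]
  rw [binomPartialSum] at hlower hsplit
  linear_combination -(1 + x ^ (m + 1)) * hlower + 2 * hsplit

theorem inverse_sub_sum_centralBinom_mul_eq (m : ℕ)
    (hD : IsUnit ((1 - x) * (1 + x ^ (m + 1)))) (hE : IsUnit ((1 + x) ^ 2)) :
    ((1 + x) * (1 - x ^ (m + 1)) * Ring.inverse ((1 - x) * (1 + x ^ (m + 1))) -
        ∑ k ∈ range (m + 1), ((2 * k).choose k : R) * (x * Ring.inverse ((1 + x) ^ 2)) ^ k) *
      ((1 - x) * (1 + x ^ (m + 1)) * (1 + x) ^ (2 * m)) =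
      2 * x ^ (m + 1) * ∑ j ∈ range (m + 1),
        (((2 * m + 1).choose (m + 1 + j) : R) - (2 * m + 1).choose j) * x ^ j := by
  rw [← one_add_pow_mul_sub_clearedCentralBinomSum,
    ← one_add_pow_mul_sum_centralBinom x (Ring.inverse_mul_cancel _ hE)]
  linear_combination ((1 + x) * (1 - x ^ (m + 1)) * (1 + x) ^ (2 * m)) *
    Ring.inverse_mul_cancel _ hD

end BinomialSums

theorem PowerSeries.dvd_coeff_of_C_dvd {R : Type*} [Semiring R] {a : R} {f : R⟦X⟧}
    (h : C a ∣ f) (n : ℕ) : a ∣ coeff n f := by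
  obtain ⟨g, rfl⟩ := h
  rw [coeff_C_mul]
  exact dvd_mul_right a _

/-- Functional supercongruence for central binomial coefficients: as formal power series
over `ℤ_[p]`, with `t = q/(1+q)²` and `t^σ = q^p/(1+q^p)²`,
`F(t) ≡ F_p(t) F(t^σ) mod p²`; equivalently
`(1+q)(1-q^p)/((1-q)(1+q^p)) ≡ ∑_{k<p} binom(2k,k) (q/(1+q)²)^k mod p²`,
i.e. all coefficients of the difference are divisible by `p²`. -/
theorem stmt_14 (p : ℕ) [Fact p.Prime] (hodd : Odd p) (n : ℕ) :
    (p : ℤ_[p]) ^ 2 ∣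
      PowerSeries.coeff (R := ℤ_[p]) n
        ((1 + X) * (1 - X ^ p) *
            Ring.inverse ((1 - X) * (1 + (X : PowerSeries ℤ_[p]) ^ p))
          - ∑ k ∈ Finset.range p,
              (Nat.choose (2 * k) k : ℤ_[p]) •
                (X * Ring.inverse ((1 + (X : PowerSeries ℤ_[p])) ^ 2)) ^ k) := by
  have hp : p.Prime := Fact.out
  obtain ⟨m, rfl⟩ : ∃ m, p = m + 1 := ⟨p - 1, by have := hp.one_lt; omega⟩
  have hD : IsUnit ((1 - X) * (1 + X ^ (m + 1)) : ℤ_[m + 1]⟦X⟧) :=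
    isUnit_iff_constantCoeff.mpr (by simp)
  have hE : IsUnit ((1 + X) ^ 2 : ℤ_[m + 1]⟦X⟧) := isUnit_iff_constantCoeff.mpr (by simp)
  have hF : IsUnit ((1 + X) ^ (2 * m) : ℤ_[m + 1]⟦X⟧) := isUnit_iff_constantCoeff.mpr (by simp)
  have hchoose (j : ℕ) (hj : j ∈ range (m + 1)) : ((m + 1 : ℕ) : ℤ_[m + 1]⟦X⟧) ^ 2 ∣
      ((2 * m + 1).choose (m + 1 + j) : ℤ_[m + 1]⟦X⟧) - (2 * m + 1).choose j := by
    have h := hp.sq_dvd_choose_add_sub_choose hodd (mem_range.mp hj)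
    rw [show 2 * (m + 1) - 1 = 2 * m + 1 by omega] at h
    exact_mod_cast map_dvd (Int.castRingHom ℤ_[m + 1]⟦X⟧) h
  simp only [Nat.cast_smul_eq_nsmul, nsmul_eq_mul]
  refine dvd_coeff_of_C_dvd ?_ n
  rw [map_pow, map_natCast, ← (hD.mul hF).dvd_mul_right,
    inverse_sub_sum_centralBinom_mul_eq X m hD hE]
  exact dvd_mul_of_dvd_right (dvd_sum fun j hj => (hchoose j hj).mul_right _) _
end

section
/- For every prime p with p \equiv \epsilon mod 3 (\epsilon = \pm 1), one has \sum_{k=0}^{p-1} \binom{2k}{k} \equiv \epsilon mod p^2. -/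
/-!
By induction on `n`, `∑_{k<n} C(2k, k) = ∑_{r ≤ n} (r/3) C(2n, n+r)`. For `n = p` the term `r = p`
is `(p/3) = ε`. For `r < p`, Vandermonde's identity gives `C(2p, p+r) ≡ 2 C(p, r) mod p²`, and
`∑_{r<p} (r/3) C(p, r) = 0` for odd `p`, because `∑_r ((r+j)/3) C(n, r) = (-1)^n ((j+2n)/3)`.
-/

open Finset

/-- The Legendre symbol `(n/3)`. -/
def χ₃ (n : ℕ) : ℤ := if n % 3 = 1 then 1 else if n % 3 = 2 then -1 else 0

lemma χ₃_zero : χ₃ 0 = 0 := rfl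

lemma χ₃_add_χ₃_add_one_add_χ₃_add_two (n : ℕ) : χ₃ n + χ₃ (n + 1) + χ₃ (n + 2) = 0 := by
  unfold χ₃; split_ifs <;> omega

lemma χ₃_two_mul (n : ℕ) : χ₃ (2 * n) = -χ₃ n := by
  unfold χ₃; split_ifs <;> omega

lemma χ₃_eq_of_modEq {n : ℕ} {ε : ℤ} (hε : ε = 1 ∨ ε = -1) (h : (n : ℤ) ≡ ε [ZMOD 3]) :
    χ₃ n = ε := by
  unfold χ₃ Int.ModEq at *; split_ifs <;> omega

/-- The coefficient of `a t` on the left is `χ₃ (t+1) + 2 χ₃ t + χ₃ (t-1) = χ₃ t`, except at the two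
ends of the range. -/
lemma sum_range_χ₃_succ_mul (a : ℕ → ℤ) (m : ℕ) :
    ∑ r ∈ range m, χ₃ (r + 1) * (a r + 2 * a (r + 1) + a (r + 2)) =
      a 0 + ∑ r ∈ range m, χ₃ r * a r + (χ₃ m - χ₃ (m + 1)) * a m + χ₃ m * a (m + 1) := by
  induction m with
  | zero => simp [χ₃]
  | succ m ih =>
    rw [sum_range_succ, sum_range_succ, ih]
    linear_combination (a (m + 1)) * χ₃_add_χ₃_add_one_add_χ₃_add_two m

lemma choose_add_two_add_two (m k : ℕ) :
    (m + 2).choose (k + 2) = m.choose k + 2 * m.choose (k + 1) + m.choose (k + 2) := by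
  simp only [Nat.choose_succ_succ]; ring

theorem sum_range_choose_two_mul_self_eq (n : ℕ) :
    ∑ k ∈ range n, ((2 * k).choose k : ℤ) =
      ∑ r ∈ range (n + 1), χ₃ r * (2 * n).choose (n + r) := by
  induction n with
  | zero => simp [χ₃_zero]
  | succ n ih =>
    set A : ℕ → ℤ := fun t => ((2 * n).choose (n + t) : ℤ)
    have hA : ∀ t, n < t → A t = 0 := fun t ht => by
      simp only [A, Nat.cast_eq_zero]; exact Nat.choose_eq_zero_of_lt (by omega)
    have pascal : ∀ r,
        ((2 * (n + 1)).choose (n + 1 + (r + 1)) : ℤ) = A r + 2 * A (r + 1) + A (r + 2) := by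
      intro r
      rw [show 2 * (n + 1) = 2 * n + 2 by ring, show n + 1 + (r + 1) = n + r + 2 by ring,
        choose_add_two_add_two]
      simp [A, add_assoc]
    rw [sum_range_succ' (fun r => χ₃ r * _), χ₃_zero, zero_mul, add_zero]
    simp only [pascal]
    rw [sum_range_χ₃_succ_mul, hA (n + 1) (by omega), hA (n + 2) (by omega), sum_range_succ, ih]
    simp [A]
    ring

/-- Writing `S j n` for the left side, Pascal's rule gives `S j (n+1) = S j n + S (j+1) n`, which is
`-S (j+2) n` because three consecutive values of `χ₃` sum to zero. -/
theorem sum_range_choose_mul_χ₃ (n j : ℕ) :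
    ∑ r ∈ range (n + 1), (n.choose r : ℤ) * χ₃ (r + j) = (-1) ^ n * χ₃ (j + 2 * n) := by
  induction n generalizing j with
  | zero => simp
  | succ n ih =>
    have := sum_choose_succ_mul (fun i _ => χ₃ (i + j)) n
    simp only [add_right_comm _ 1 j, add_assoc] at this
    rw [this, ih, ih]
    have := χ₃_add_χ₃_add_one_add_χ₃_add_two (j + 2 * n)
    rw [show j + 2 * (n + 1) = j + 2 * n + 2 by ring,
      show j + 1 + 2 * n = j + 2 * n + 1 by ring, pow_succ]
    linear_combination (-1) ^ n * this

theorem sum_range_choose_mul_χ₃_of_odd {n : ℕ} (hn : Odd n) :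
    ∑ r ∈ range n, (n.choose r : ℤ) * χ₃ r = 0 := by
  have := sum_range_choose_mul_χ₃ n 0
  rw [sum_range_succ, Nat.choose_self, zero_add, χ₃_two_mul, hn.neg_one_pow] at this
  simpa using this

lemma sq_dvd_choose_mul_choose {p i j : ℕ} (hp : p.Prime) (hi : i ≠ 0) (hj : j ≠ 0)
    (hip : i < p) (hjp : j < p) :
    p ^ 2 ∣ p.choose i * p.choose j :=
  pow_two p ▸ mul_dvd_mul (hp.dvd_choose_self hi hip) (hp.dvd_choose_self hj hjp)

/-- In Vandermonde's sum `∑_{i+j=p+r} C(p,i) C(p,j)` the terms `(r, p)` and `(p, r)` give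
`2 C(p, r)`; every other term vanishes or has both `i, j` strictly between `0` and `p`. -/
theorem sq_dvd_choose_two_mul_add_sub {p r : ℕ} (hp : p.Prime) (hr : r < p) :
    (p : ℤ) ^ 2 ∣ (2 * p).choose (p + r) - 2 * p.choose r := by
  have hrp : r ≠ p := hr.ne
  have vandermonde : ((2 * p).choose (p + r) : ℤ) - 2 * p.choose r =
      ∑ ij ∈ antidiagonal (p + r), ((p.choose ij.1 * p.choose ij.2 : ℤ)
        - (if ij = (r, p) then (p.choose r : ℤ) else 0)
        - (if ij = (p, r) then (p.choose r : ℤ) else 0)) := by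
    rw [sum_sub_distrib, sum_sub_distrib, sum_ite_eq', sum_ite_eq', two_mul, Nat.add_choose_eq]
    simp [add_comm r p]; ring
  rw [vandermonde]
  refine dvd_sum fun ⟨i, j⟩ hij => ?_
  rw [HasAntidiagonal.mem_antidiagonal] at hij
  by_cases hi : i = r
  · subst hi
    obtain rfl : j = p := by omega
    simp [hrp]
  by_cases hj : j = r
  · subst hj
    obtain rfl : i = p := by omega
    simp [hrp]
  simp only [Prod.mk.injEq, hi, hj, false_and, and_false, if_false, sub_zero]
  by_cases hsmall : i < p ∧ j < p
  · exact_mod_cast sq_dvd_choose_mul_choose hp (by omega) (by omega) hsmall.1 hsmall.2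
  · rcases Nat.lt_or_gt_of_ne (show i ≠ p by omega) with hip | hip
    · simp [Nat.choose_eq_zero_of_lt (show p < j by omega)]
    · simp [Nat.choose_eq_zero_of_lt hip]

/-- For any prime `p ≡ ε mod 3` with `ε = ±1`,
`∑_{k<p} binom(2k,k) ≡ ε mod p²` in the integers. -/
theorem stmt_15 (p : ℕ) (hp : p.Prime) (ε : ℤ) (hε : ε = 1 ∨ ε = -1)
    (hmod : (p : ℤ) ≡ ε [ZMOD 3]) :
    (p : ℤ) ^ 2 ∣ (∑ k ∈ Finset.range p, (Nat.choose (2 * k) k : ℤ)) - ε := by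
  rcases hp.eq_two_or_odd' with rfl | hodd
  · obtain rfl : ε = -1 := by unfold Int.ModEq at hmod; omega
    decide
  have hχp : χ₃ p = ε := χ₃_eq_of_modEq hε hmod
  have hsum : (∑ k ∈ range p, ((2 * k).choose k : ℤ)) - ε =
      ∑ r ∈ range p, χ₃ r * (((2 * p).choose (p + r) : ℤ) - 2 * p.choose r) := by
    have hvanish : ∑ r ∈ range p, χ₃ r * (2 * p.choose r : ℤ) = 0 := by
      simp only [mul_left_comm _ (2 : ℤ), ← mul_sum, mul_comm (χ₃ _),
        sum_range_choose_mul_χ₃_of_odd hodd, mul_zero]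
    rw [sum_range_choose_two_mul_self_eq, sum_range_succ, ← two_mul, Nat.choose_self, hχp]
    simp only [mul_sub, sum_sub_distrib, hvanish]
    push_cast; ring
  rw [hsum]
  exact dvd_sum fun r hr => (sq_dvd_choose_two_mul_add_sub hp (mem_range.mp hr)).mul_left _
end

section
/- For every odd prime p, \sum_{k=0}^{p-1} \binom{2k}{k} 2^{-k} \equiv \epsilon mod p^2 in Z_p, where \epsilon = \pm 1 is determined by p \equiv \epsilon mod 4. -/
/-!
Write `binom(x, k) = x(x-1)⋯(x-k+1)/k!` and `p = 2n + 1`. Since `binom(2k, k) = (-4)^k binom(-1/2, k)`,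
the sum is `F(-1/2)` for `F(x) = ∑_{k ≤ 2n} (-2)^k binom(x, k)`. By the binomial theorem
`F(m) = (-1)^m` for `m = 0, …, 2n`, and `F` has degree `2n`, so `F(2n - x) = F(x)` and hence `F'(n) = 0`.
Modulo `p²` we have `-1/2 ≡ n + np` with `(np)² ≡ 0`, so `F(-1/2) ≡ F(n) + np F'(n) = (-1)^n = ε`.
Since `(2n)!` is prime to `p`, one may work with `(2n)! F ∈ ℤ[X]` instead, where interpolation
at `0, …, 2n` gives the symmetry.
-/

open Finset Polynomial
open scoped Nat

namespace Polynomial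

variable {R : Type*} [CommRing R]

theorem eval_derivative_eq_zero_of_comp_C_sub_X_eq_self [NoZeroDivisors R] [CharZero R]
    {P : R[X]} (a : R) (h : P.comp (C (2 * a) - X) = P) : P.derivative.eval a = 0 := by
  have h' := congrArg (fun Q => Q.derivative.eval a) h
  simp only [derivative_comp, derivative_sub, derivative_C, derivative_X, eval_mul, eval_comp,
    eval_sub, eval_C, eval_X, zero_sub, eval_neg, eval_one] at h'
  have h2 : (2 : R) * P.derivative.eval a = 0 := by
    rw [show 2 * a - a = a by ring] at h'
    linear_combination -h'
  simpa using h2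

theorem comp_C_sub_X_eq_self_of_eval_natCast_sub [IsDomain R] [CharZero R] {P : R[X]} {N : ℕ}
    (hdeg : P.natDegree ≤ N) (hP : ∀ m ≤ N, P.eval ((N - m : ℕ) : R) = P.eval (m : R)) :
    P.comp (C (N : R) - X) = P := by
  refine eq_of_natDegree_lt_card_of_eval_eq _ _
    (f := fun i : Fin (N + 1) => ((i : ℕ) : R)) (Nat.cast_injective.comp Fin.val_injective) ?_ ?_
  · intro i
    have hi : (i : ℕ) ≤ N := Nat.lt_succ_iff.mp i.isLt
    simp only [eval_comp, eval_sub, eval_C, eval_X, ← hP i hi, Nat.cast_sub hi]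
  · have hlin : (C (N : R) - X).natDegree ≤ 1 := (natDegree_sub_le _ _).trans (by simp)
    have := natDegree_comp_le (p := P) (q := C (N : R) - X)
    rw [Fintype.card_fin, max_lt_iff]
    constructor <;> nlinarith

end Polynomial

theorem sum_range_pow_mul_choose_of_le {R : Type*} [CommRing R] (x : R) {m N : ℕ} (hm : m ≤ N) :
    ∑ k ∈ range (N + 1), x ^ k * m.choose k = (x + 1) ^ m := by
  rw [add_pow, ← sum_subset (range_subset_range.mpr (by omega : m + 1 ≤ N + 1))]
  · simp
  · intro k _ hk
    rw [Nat.choose_eq_zero_of_lt (by simpa using hk)]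
    simp

theorem Nat.Coprime.isUnit_natCast_of_natCast_eq_zero {R : Type*} [CommRing R] {m q : ℕ}
    (h : m.Coprime q) (hq : (q : R) = 0) : IsUnit (m : R) := by
  simpa [hq, isCoprime_zero_right] using (Nat.isCoprime_iff_coprime.mpr h).map (Int.castRingHom R)

/-- `N! · ∑_{k ≤ N} (-2)^k binom(X, k)`, written with `binom(X, k) = descPochhammer ℤ k / k!`. -/
noncomputable def negTwoPowBinomPoly (N : ℕ) : ℤ[X] :=
  ∑ k ∈ range (N + 1), C ((-2 : ℤ) ^ k * (N ! / k ! : ℕ)) * descPochhammer ℤ k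

theorem natDegree_negTwoPowBinomPoly_le (N : ℕ) : (negTwoPowBinomPoly N).natDegree ≤ N := by
  refine natDegree_sum_le_of_forall_le _ _ fun k hk => (natDegree_C_mul_le _ _).trans ?_
  rw [descPochhammer_natDegree]
  exact Nat.lt_succ_iff.mp (mem_range.mp hk)

theorem eval_natCast_negTwoPowBinomPoly {m N : ℕ} (hm : m ≤ N) :
    (negTwoPowBinomPoly N).eval (m : ℤ) = (-1) ^ m * N ! := by
  have hterm : ∀ k ∈ range (N + 1),
      (C ((-2 : ℤ) ^ k * (N ! / k ! : ℕ)) * descPochhammer ℤ k).eval (m : ℤ)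
        = N ! * ((-2) ^ k * m.choose k) := by
    intro k hk
    have hkN : (N ! : ℤ) = k ! * (N ! / k ! : ℕ) := by
      exact_mod_cast (Nat.mul_div_cancel'
        (Nat.factorial_dvd_factorial (Nat.lt_succ_iff.mp (mem_range.mp hk)))).symm
    rw [eval_mul, eval_C, descPochhammer_eval_eq_descFactorial,
      Nat.descFactorial_eq_factorial_mul_choose, hkN]
    push_cast
    ring
  rw [negTwoPowBinomPoly, eval_finsetSum, sum_congr rfl hterm, ← mul_sum,
    sum_range_pow_mul_choose_of_le _ hm]
  norm_num
  ring

theorem negTwoPowBinomPoly_comp_C_sub_X {N : ℕ} (hN : Even N) :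
    (negTwoPowBinomPoly N).comp (C (N : ℤ) - X) = negTwoPowBinomPoly N := by
  refine comp_C_sub_X_eq_self_of_eval_natCast_sub (natDegree_negTwoPowBinomPoly_le N)
    fun m hm => ?_
  rw [eval_natCast_negTwoPowBinomPoly (Nat.sub_le N m), eval_natCast_negTwoPowBinomPoly hm]
  rcases m.even_or_odd with hm' | hm'
  · rw [hm'.neg_one_pow, ((Nat.even_sub hm).mpr (iff_of_true hN hm')).neg_one_pow]
  · rw [hm'.neg_one_pow, ((Nat.odd_sub' hm).mpr (iff_of_true hm' hN)).neg_one_pow]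

theorem eval_derivative_negTwoPowBinomPoly (n : ℕ) :
    (negTwoPowBinomPoly (2 * n)).derivative.eval (n : ℤ) = 0 := by
  refine eval_derivative_eq_zero_of_comp_C_sub_X_eq_self _ ?_
  simpa using negTwoPowBinomPoly_comp_C_sub_X (even_two_mul n)

section NegHalf

variable {R : Type*} [CommRing R]

theorem neg_four_pow_mul_descPochhammer_eval {y : R} (hy : 2 * y = -1) (k : ℕ) :
    (-4) ^ k * (descPochhammer R k).eval y = ((2 * k).choose k * k ! : ℕ) := by
  induction k with
  | zero => simp
  | succ k ih =>
    have hrec :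
        (2 * (k + 1)).choose (k + 1) * (k + 1)! = (2 * k).choose k * k ! * (4 * k + 2) := by
      have h := Nat.succ_mul_centralBinom_succ k
      simp only [Nat.centralBinom_eq_two_mul_choose] at h
      rw [Nat.factorial_succ]
      linear_combination k ! * h
    rw [descPochhammer_succ_eval, hrec]
    push_cast at ih ⊢
    linear_combination (-4 * (y - k)) * ih - 2 * ((2 * k).choose k * k ! : R) * hy

theorem aeval_neg_negTwoPowBinomPoly {v : R} (hv : 2 * v = 1) (N : ℕ) :
    aeval (-v) (negTwoPowBinomPoly N)
      = N ! * ∑ k ∈ range (N + 1), ((2 * k).choose k : R) * v ^ k := by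
  rw [negTwoPowBinomPoly, map_sum, mul_sum]
  refine sum_congr rfl fun k hk => ?_
  have hkN : (N ! : R) = (k ! : R) * ((N ! / k ! : ℕ) : R) := by
    rw [← Nat.cast_mul,
      Nat.mul_div_cancel' (Nat.factorial_dvd_factorial (Nat.lt_succ_iff.mp (mem_range.mp hk)))]
  have hpow : (-2 : R) ^ k = (-4) ^ k * v ^ k := by
    rw [← mul_pow]
    congr 1
    linear_combination 2 * hv
  have hD := neg_four_pow_mul_descPochhammer_eval (y := -v) (by rw [mul_neg, hv]) k
  push_cast at hD
  rw [map_mul, aeval_C, ← eval_map_algebraMap, descPochhammer_map, algebraMap_int_eq, eq_intCast,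
    hkN]
  simp only [Int.cast_mul, Int.cast_pow, Int.cast_neg, Int.cast_ofNat, Int.cast_natCast, hpow]
  linear_combination (v ^ k * ((N ! / k ! : ℕ) : R)) * hD

theorem sum_choose_two_mul_mul_pow_eq_neg_one_pow (n : ℕ) {v t : R} (hv : 2 * v = 1)
    (ht : t ^ 2 = 0) (hnt : (n : R) + t = -v) (hfac : IsUnit ((2 * n)! : R)) :
    ∑ k ∈ range (2 * n + 1), ((2 * k).choose k : R) * v ^ k = (-1) ^ n := by
  refine hfac.mul_left_cancel ?_
  have haeval : ∀ Q : ℤ[X], aeval (n : R) Q = ((Q.eval (n : ℤ) : ℤ) : R) := fun Q => by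
    simpa using aeval_algebraMap_apply_eq_algebraMap_eval (R := ℤ) (A := R) (n : ℤ) Q
  rw [← aeval_neg_negTwoPowBinomPoly hv, ← hnt, aeval_add_of_sq_eq_zero _ _ _ ht, haeval, haeval,
    eval_natCast_negTwoPowBinomPoly (by omega), eval_derivative_negTwoPowBinomPoly]
  push_cast
  ring

theorem sum_range_choose_two_mul_mul_pow_eq_neg_one_pow {p n : ℕ} (hp : p.Prime)
    (hpn : p = 2 * n + 1) (hR : (p : R) ^ 2 = 0) {v : R} (hv : 2 * v = 1) :
    ∑ k ∈ range p, ((2 * k).choose k : R) * v ^ k = (-1) ^ n := by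
  have hfac : IsUnit ((2 * n)! : R) :=
    ((hp.coprime_factorial_of_lt (by omega)).symm.pow_right 2).isUnit_natCast_of_natCast_eq_zero
      (by exact_mod_cast hR)
  have ht : ((n * p : ℕ) : R) ^ 2 = 0 := by
    rw [Nat.cast_mul, mul_pow, hR, mul_zero]
  -- `n + np = (p² - 1)/2 = -1/2` once `p² = 0`
  have hnt : (n : R) + (n * p : ℕ) = -v := by
    have hp' : (p : R) = 2 * n + 1 := by simp [hpn]
    push_cast
    linear_combination (-(n * (p + 1) : R)) * hv - v * (p + 1) * hp' + v * hR
  rw [hpn]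
  exact sum_choose_two_mul_mul_pow_eq_neg_one_pow n hv ht hnt hfac

end NegHalf

theorem neg_one_pow_eq_of_two_mul_add_one_modEq {n : ℕ} {ε : ℤ} (hε : ε = 1 ∨ ε = -1)
    (hmod : ((2 * n + 1 : ℕ) : ℤ) ≡ ε [ZMOD 4]) : (-1) ^ n = ε := by
  rcases hε with rfl | rfl <;> rcases n.even_or_odd with hn | hn <;>
    simp only [hn.neg_one_pow] <;> obtain ⟨j, rfl⟩ := hn <;> simp [Int.ModEq] at hmod ⊢ <;> omega

/-- For any odd prime `p ≡ ε mod 4` with `ε = ±1`,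
`∑_{k<p} binom(2k,k) 2^{-k} ≡ ε mod p²` in `ℤ_[p]`. -/
theorem stmt_16 (p : ℕ) [Fact p.Prime] (hodd : Odd p) (ε : ℤ) (hε : ε = 1 ∨ ε = -1)
    (hmod : (p : ℤ) ≡ ε [ZMOD 4]) :
    (p : ℤ_[p]) ^ 2 ∣
      (∑ k ∈ Finset.range p,
          ((Nat.choose (2 * k) k : ℤ_[p]) * (Ring.inverse (2 : ℤ_[p])) ^ k))
        - (ε : ℤ_[p]) := by
  have hp : p.Prime := Fact.out
  obtain ⟨n, hpn⟩ := hodd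
  have h2 : IsUnit (2 : ℤ_[p]) := by
    exact_mod_cast PadicInt.isUnit_iff.mpr <| PadicInt.norm_natCast_eq_one_iff.mpr <|
      (Nat.coprime_primes hp Nat.prime_two).mpr (by omega)
  set π := Ideal.Quotient.mk (Ideal.span {(p : ℤ_[p]) ^ 2})
  have hR : (p : ℤ_[p] ⧸ Ideal.span {(p : ℤ_[p]) ^ 2}) ^ 2 = 0 := by
    rw [← map_natCast π, ← map_pow]
    exact (Ideal.Quotient.eq_zero_iff_dvd _ _).mpr dvd_rfl
  have hv : 2 * π (Ring.inverse 2) = 1 := by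
    rw [← map_ofNat π 2, ← map_mul, Ring.mul_inverse_cancel _ h2, map_one]
  rw [← Ideal.Quotient.eq_zero_iff_dvd, map_sub, map_sum, sub_eq_zero, map_intCast,
    ← neg_one_pow_eq_of_two_mul_add_one_modEq hε (hpn ▸ hmod)]
  simpa only [map_mul, map_pow, map_natCast, Int.cast_pow, Int.cast_neg, Int.cast_one] using
    sum_range_choose_two_mul_mul_pow_eq_neg_one_pow hp hpn hR hv
end

section
/- For every odd prime p, \sum_{k=0}^{p-1} \binom{2k}{k} 4^{-k} \equiv p mod p^2 in Z_p. -/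
open Finset Nat

/-!
When `4u = 1` the partial sums telescope: `∑_{k<n} C(2k,k) uᵏ = 2n C(2n,n) uⁿ`. For `n = p` this is
`p · 2C(2p,p) uᵖ`, and `2C(2p,p) ≡ 4 ≡ 4ᵖ (mod p)` by Lucas and Fermat, so `2C(2p,p) uᵖ ≡ (4u)ᵖ = 1`.
-/

theorem Nat.sum_range_centralBinom_mul_pow {R : Type*} [CommRing R] {u : R} (hu : 4 * u = 1)
    (n : ℕ) : ∑ k ∈ range n, (centralBinom k : R) * u ^ k = 2 * n * centralBinom n * u ^ n := by
  induction n with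
  | zero => simp
  | succ n ih =>
    have hstep := congrArg (Nat.cast : ℕ → R) (succ_mul_centralBinom_succ n)
    rw [sum_range_succ, ih]
    push_cast at hstep ⊢
    linear_combination (-2 * u ^ (n + 1)) * hstep - ((2 * n + 1) * centralBinom n * u ^ n) * hu

theorem Nat.centralBinom_modEq_two (p : ℕ) [Fact p.Prime] : centralBinom p ≡ 2 [MOD p] := by
  have hp : 0 < p := (Fact.out : p.Prime).pos
  have lucas := Choose.choose_modEq_choose_mod_mul_choose_div_nat (n := 2 * p) (k := p) (p := p)
  rwa [mul_mod_left, mod_self, Nat.mul_div_cancel _ hp, Nat.div_self hp, choose_zero_right,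
    one_mul, choose_one_right, ← centralBinom_eq_two_mul_choose] at lucas

theorem Nat.prime_dvd_two_mul_centralBinom_sub_four_pow (p : ℕ) [Fact p.Prime] :
    (p : ℤ) ∣ 2 * centralBinom p - 4 ^ p := by
  rw [← ZMod.intCast_zmod_eq_zero_iff_dvd]
  push_cast
  rw [ZMod.pow_card, (ZMod.natCast_eq_natCast_iff _ _ _).mpr (centralBinom_modEq_two p)]
  norm_num

theorem PadicInt.isUnit_natCast_iff {p : ℕ} [Fact p.Prime] {n : ℕ} :
    IsUnit (n : ℤ_[p]) ↔ p.Coprime n := by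
  rw [isUnit_iff, norm_natCast_eq_one_iff]

/-- For every odd prime `p`, `∑_{k<p} binom(2k,k) 4^{-k} ≡ p mod p²` in `ℤ_[p]`. -/
theorem stmt_18 (p : ℕ) [Fact p.Prime] (hodd : Odd p) :
    (p : ℤ_[p]) ^ 2 ∣
      (∑ k ∈ Finset.range p,
          ((Nat.choose (2 * k) k : ℤ_[p]) * (Ring.inverse (4 : ℤ_[p])) ^ k))
        - (p : ℤ_[p]) := by
  set u := Ring.inverse (4 : ℤ_[p])
  have h4 : IsUnit (4 : ℤ_[p]) := by
    rw [← Nat.cast_ofNat, PadicInt.isUnit_natCast_iff]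
    exact (coprime_two_right.mpr hodd).pow_right 2
  have hu : 4 * u = 1 := Ring.mul_inverse_cancel _ h4
  have hup : 4 ^ p * u ^ p = 1 := by rw [← mul_pow, hu, one_pow]
  obtain ⟨c, hc⟩ := prime_dvd_two_mul_centralBinom_sub_four_pow p
  have hc' : (2 * centralBinom p - 4 ^ p : ℤ_[p]) = p * c := by
    exact_mod_cast congrArg (Int.cast : ℤ → ℤ_[p]) hc
  simp only [← centralBinom_eq_two_mul_choose]
  rw [sum_range_centralBinom_mul_pow hu]
  exact ⟨c * u ^ p, by linear_combination (p * u ^ p) * hc' + p * hup⟩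
end
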